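/- For every integer p ≥ 0: Res_{ħ=0}( ((1+ħ)^n − 1)/(ħ³ ∏_{k=1}^r(d_k+ħ)) · ( 1 − ∑_{β≥0} ∑_{l=0}^{p−νβ} c̃_{p,l}^{(β)} q^β ħ^{p−νβ−l} ) ) = (n/∏_{k=1}^r d_k) · ( ((n−1)/2 − ∑_{k=1}^r 1/d_k)·(1 − ∑_{β=0}^{⌊p/ν⌋} c̃_{p,p−νβ}^{(β)} q^β) − ∑_{β=0}^{⌊p/ν⌋} c̃_{p,p−νβ−1}^{(β)} q^β ), an identity in ℚ[[q]]. Here ((1+ħ)^n − 1)/(ħ³ ∏_{k}(d_k+ħ)) is expanded as a Laurent series at ħ = 0 (each d_k + ħ has nonzero constant term d_k), the inner sum over β and l is a q-power series whose q-coefficients are Laurent polynomials in ħ, and Res_{ħ=0} takes in each q-coefficient the coefficient of ħ^{−1}. -/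

import Mathlib

/-- The Laurent-series variable `ħ`. -/
noncomputable def Zl : LaurentSeries ℚ := HahnSeries.single (1 : ℤ) (1 : ℚ)

/-- `Res_{ħ=0}`: in each q-coefficient take the coefficient of `ħ⁻¹`. -/
noncomputable def resH (f : PowerSeries (LaurentSeries ℚ)) : PowerSeries ℚ :=
  PowerSeries.mk fun β => (PowerSeries.coeff (R := LaurentSeries ℚ) β f).coeff (-1)

/-- The coefficients `c_{p,l}^{(β)}`. -/
noncomputable def ccoef (n r : ℕ) (d : Fin r → ℕ) (p β : ℕ) (l : ℤ) : ℚ :=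
  if l < 0 then 0 else
    PowerSeries.coeff (R := ℚ) l.toNat
      (((PowerSeries.X + (β : PowerSeries ℚ)) ^ p *
          ∏ k : Fin r, ∏ i ∈ Finset.range (d k * β),
            ((d k : PowerSeries ℚ) * PowerSeries.X + ((i + 1 : ℕ) : PowerSeries ℚ))) *
        (∏ j ∈ Finset.range β, (PowerSeries.X + ((j + 1 : ℕ) : PowerSeries ℚ)) ^ n)⁻¹)


/-!
Write `(1 + ħ)ⁿ - 1 = ħ B(ħ)`, so that the integrand is `ħ⁻² G(ħ)` with the power series
`G = B / ∏ₖ (dₖ + ħ)`. Then `G(0) = n / ∏ₖ dₖ`, and since `B'(0) / B(0) = (n - 1) / 2` and the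
logarithmic derivative of `∏ₖ (dₖ + ħ)` at `0` is `∑ₖ 1 / dₖ`, `G'(0) = G(0) ((n - 1)/2 - ∑ₖ 1/dₖ)`.
The `q^β`-coefficient of the series `Sp p` only has nonnegative powers `ħ^(p - νβ - l)`, so against
`ħ⁻² G(ħ)` only the exponents `0` and `1` contribute to the residue, namely
`G'(0) c̃_{p,p-νβ} + G(0) c̃_{p,p-νβ-1}`; for `β > p / ν` both coefficients vanish.
-/

open PowerSeries Finset

namespace PowerSeries

theorem coeff_one_add_X_pow {R : Type*} [Semiring R] (n j : ℕ) :
    coeff j ((1 + X : R⟦X⟧) ^ n) = n.choose j := by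
  rw [← Polynomial.coeff_one_add_X_pow, ← Polynomial.coeff_coe]
  simp

theorem sum_range_C_mul_X_pow_eq_mk {R : Type*} [Semiring R] (c : ℕ → R) (N : ℕ)
    (hc : ∀ β, N < β → c β = 0) : ∑ β ∈ range (N + 1), C (c β) * X ^ β = mk c := by
  ext β
  simp only [map_sum, coeff_C_mul_X_pow, sum_ite_eq, mem_range, coeff_mk]
  split_ifs with h
  · rfl
  · exact (hc β (by omega)).symm

variable {K : Type*} [Field K]

theorem coeff_one_prod {ι : Type*} [DecidableEq ι] (s : Finset ι) (f : ι → K⟦X⟧)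
    (hf : ∀ i ∈ s, constantCoeff (f i) ≠ 0) :
    coeff 1 (∏ i ∈ s, f i) =
      (∏ i ∈ s, constantCoeff (f i)) * ∑ i ∈ s, coeff 1 (f i) / constantCoeff (f i) := by
  induction s using Finset.induction with
  | empty => simp
  | insert i s hi ih =>
    have hfi := hf i (mem_insert_self i s)
    rw [prod_insert hi, coeff_one_mul, ih fun j hj => hf j (mem_insert_of_mem hj), map_prod,
      prod_insert hi, sum_insert hi]
    field_simp

theorem coeff_one_mul_inv (f g : K⟦X⟧) (hg : constantCoeff g ≠ 0) :
    coeff 1 (f * g⁻¹) =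
      (coeff 1 f - constantCoeff f * coeff 1 g / constantCoeff g) / constantCoeff g := by
  have h := coeff_one_mul (f * g⁻¹) g
  rw [mul_assoc, PowerSeries.inv_mul_cancel g hg, mul_one, map_mul constantCoeff,
    constantCoeff_inv] at h
  rw [h]
  field_simp
  ring

end PowerSeries

namespace LaurentSeries

variable {R : Type*} [CommRing R]

theorem coeff_single_neg_two_mul_ofPowerSeries (G : R⟦X⟧) (j : ℤ) :
    (HahnSeries.single (-2 : ℤ) 1 * HahnSeries.ofPowerSeries ℤ R G).coeff j =
      if j + 2 < 0 then 0 else coeff (j + 2).natAbs G := by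
  rw [show j = j + 2 + -2 by ring, HahnSeries.coeff_single_mul_add, one_mul, coeff_coe]
  simp

theorem coeff_neg_one_mul_sum_single (F : LaurentSeries R) (hF : ∀ j < -2, F.coeff j = 0)
    (c : ℤ → R) (hc : ∀ l < 0, c l = 0) (M : ℤ) :
    (F * ∑ l ∈ Icc 0 M, HahnSeries.single (M - l) (c l)).coeff (-1) =
      F.coeff (-1) * c M + F.coeff (-2) * c (M - 1) := by
  have hterm (l : ℤ) :
      (F * HahnSeries.single (M - l) (c l)).coeff (-1) = F.coeff (l - M - 1) * c l := by
    rw [show (-1 : ℤ) = l - M - 1 + (M - l) by ring, HahnSeries.coeff_mul_single_add]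
  rw [mul_sum, HahnSeries.coeff_sum, sum_congr rfl fun l _ => hterm l,
    sum_eq_add M (M - 1) (by omega)]
  · ring_nf
  · intro l hl _
    rw [hF _ (by have := (mem_Icc.1 hl).2; omega), zero_mul]
  · intro hM
    rw [hc M (by simp at hM; omega), mul_zero]
  · intro hM
    rw [hc (M - 1) (by simp at hM; omega), mul_zero]

end LaurentSeries

noncomputable def binomialQuotient (n : ℕ) : ℚ⟦X⟧ := mk fun i => (n.choose (i + 1) : ℚ)

theorem X_mul_binomialQuotient (n : ℕ) : X * binomialQuotient n = (1 + X) ^ n - 1 := by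
  ext (_ | i) <;> simp [binomialQuotient, coeff_succ_X_mul, coeff_one_add_X_pow, coeff_one]

theorem constantCoeff_binomialQuotient (n : ℕ) : constantCoeff (binomialQuotient n) = n := by
  rw [← coeff_zero_eq_constantCoeff_apply]
  simp [binomialQuotient]

theorem coeff_one_binomialQuotient (n : ℕ) :
    coeff 1 (binomialQuotient n) = n * (n - 1) / 2 := by
  simp [binomialQuotient, Nat.cast_choose_two]

theorem coeff_one_natCast_add_X (a : ℕ) : coeff 1 ((a : ℚ⟦X⟧) + X) = 1 := by
  rw [← map_natCast (C (R := ℚ)), map_add, coeff_C, coeff_one_X]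
  simp

noncomputable def regularizedIntegrand (n : ℕ) {r : ℕ} (d : Fin r → ℕ) : ℚ⟦X⟧ :=
  binomialQuotient n * (∏ k, ((d k : ℚ⟦X⟧) + X))⁻¹

section RegularizedIntegrand

variable (n : ℕ) {r : ℕ} {d : Fin r → ℕ}

theorem constantCoeff_regularizedIntegrand :
    constantCoeff (regularizedIntegrand n d) = n / ∏ k, (d k : ℚ) := by
  simp [regularizedIntegrand, map_prod, constantCoeff_binomialQuotient, div_eq_mul_inv]

theorem coeff_one_regularizedIntegrand (hd : ∀ k, d k ≠ 0) :
    coeff 1 (regularizedIntegrand n d) =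
      (n / ∏ k, (d k : ℚ)) * ((n - 1) / 2 - ∑ k, 1 / (d k : ℚ)) := by
  have hdq : ∀ k, (d k : ℚ) ≠ 0 := fun k => Nat.cast_ne_zero.2 (hd k)
  have hP : ∏ k, (d k : ℚ) ≠ 0 := prod_ne_zero_iff.2 fun k _ => hdq k
  rw [regularizedIntegrand, coeff_one_mul_inv _ _ (by simp [map_prod, prod_ne_zero_iff, hdq]),
    coeff_one_prod _ _ (by simp [hdq])]
  simp [constantCoeff_binomialQuotient, coeff_one_binomialQuotient, map_prod,
    coeff_one_natCast_add_X]
  field_simp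

theorem Zl_eq_ofPowerSeries_X : Zl = HahnSeries.ofPowerSeries ℤ ℚ X :=
  HahnSeries.ofPowerSeries_X.symm

theorem integrand_eq_single_mul_regularizedIntegrand (hd : ∀ k, d k ≠ 0) :
    ((1 + Zl) ^ n - 1) / (Zl ^ 3 * ∏ k, ((d k : LaurentSeries ℚ) + Zl)) =
      HahnSeries.single (-2) 1 * HahnSeries.ofPowerSeries ℤ ℚ (regularizedIntegrand n d) := by
  rw [regularizedIntegrand]
  set ι := HahnSeries.ofPowerSeries ℤ ℚ
  set P : ℚ⟦X⟧ := ∏ k, ((d k : ℚ⟦X⟧) + X)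
  have hP : constantCoeff P ≠ 0 := by simp [P, map_prod, prod_ne_zero_iff, hd]
  have hιP : ι P ≠ 0 :=
    (map_ne_zero_iff _ HahnSeries.ofPowerSeries_injective).2 fun h => hP (by simp [h])
  have hnum : (1 + Zl) ^ n - 1 = Zl * ι (binomialQuotient n) := by
    rw [Zl_eq_ofPowerSeries_X, ← map_mul, X_mul_binomialQuotient]
    simp
  have hden : Zl ^ 3 * ∏ k, ((d k : LaurentSeries ℚ) + Zl) = Zl ^ 3 * ι P := by
    simp [P, ι, map_prod, Zl_eq_ofPowerSeries_X]
  have hZl : Zl ^ 3 * HahnSeries.single (-2) 1 = Zl := by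
    simp [Zl, HahnSeries.single_pow, HahnSeries.single_mul_single]
  rw [hnum, hden, div_eq_iff (mul_ne_zero (pow_ne_zero _ (by simp [Zl])) hιP)]
  calc Zl * ι (binomialQuotient n)
      = Zl ^ 3 * HahnSeries.single (-2) 1 * ι (binomialQuotient n * P⁻¹ * P) := by
        rw [hZl, mul_assoc, PowerSeries.inv_mul_cancel _ hP, mul_one]
    _ = _ := by simp only [map_mul]; ring

end RegularizedIntegrand

theorem stmt11_general (n r : ℕ) (d : Fin r → ℕ) (hd : ∀ k, 2 ≤ d k)
    (m : ℕ)
    (ν : ℕ) (hν : ν = n - m) (hmn : m < n)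
    -- the coefficients c̃_{p,l}^{(β)}
    (ct : ℕ → ℤ → ℕ → ℚ)
    (hctz : ∀ (p : ℕ) (l : ℤ) (β : ℕ),
      (l < 0 ∨ (p : ℤ) - (ν : ℤ) * (β : ℤ) < l) → ct p l β = 0)
    -- the series ∑_{β≥0} ∑_{l=0}^{p−νβ} c̃_{p,l}^{(β)} q^β ħ^{p−νβ−l}
    (Sp : ℕ → PowerSeries (LaurentSeries ℚ))
    (hSp : ∀ (p β : ℕ), PowerSeries.coeff (R := LaurentSeries ℚ) β (Sp p) =
      ∑ l ∈ Finset.Icc (0 : ℤ) ((p : ℤ) - (ν : ℤ) * (β : ℤ)),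
        HahnSeries.single ((p : ℤ) - (ν : ℤ) * (β : ℤ) - l) (ct p l β)) :
    ∀ p : ℕ,
      resH (PowerSeries.C (R := LaurentSeries ℚ)
          (((1 + Zl) ^ n - 1) / (Zl ^ 3 * ∏ k : Fin r, ((d k : LaurentSeries ℚ) + Zl))) *
          (1 - Sp p))
        = PowerSeries.C (R := ℚ) ((n : ℚ) / ∏ k : Fin r, (d k : ℚ)) *
            (PowerSeries.C (R := ℚ) (((n : ℚ) - 1) / 2 - ∑ k : Fin r, 1 / (d k : ℚ)) *
              (1 - ∑ β ∈ Finset.range (p / ν + 1),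
                PowerSeries.C (R := ℚ) (ct p ((p : ℤ) - (ν : ℤ) * (β : ℤ)) β) * PowerSeries.X ^ β)
            - ∑ β ∈ Finset.range (p / ν + 1),
                PowerSeries.C (R := ℚ) (ct p ((p : ℤ) - (ν : ℤ) * (β : ℤ) - 1) β) *
                  PowerSeries.X ^ β) := by
  intro p
  have hd' : ∀ k, d k ≠ 0 := fun k => (zero_lt_two.trans_le (hd k)).ne'
  have hneg : ∀ β, p / ν < β → (p : ℤ) - ν * β < 0 := fun β hβ => by
    have := (Nat.div_lt_iff_lt_mul (by omega)).1 hβ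
    zify at this
    linarith
  rw [sum_range_C_mul_X_pow_eq_mk _ _ fun β hβ => hctz _ _ _ (Or.inl (hneg β hβ)),
    sum_range_C_mul_X_pow_eq_mk _ _ fun β hβ => hctz _ _ _ (Or.inl (by linarith [hneg β hβ])),
    integrand_eq_single_mul_regularizedIntegrand n hd']
  ext β
  rw [resH, coeff_mk, coeff_C_mul, map_sub, coeff_one, hSp, mul_sub, HahnSeries.coeff_sub,
    LaurentSeries.coeff_neg_one_mul_sum_single _
      (fun j hj => by rw [LaurentSeries.coeff_single_neg_two_mul_ofPowerSeries, if_pos (by omega)])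
      _ (fun l hl => hctz p l β (Or.inl hl)),
    coeff_C_mul, map_sub, coeff_C_mul, map_sub, coeff_one, coeff_mk, coeff_mk]
  split_ifs <;>
    simp [LaurentSeries.coeff_single_neg_two_mul_ofPowerSeries, constantCoeff_regularizedIntegrand,
      coeff_one_regularizedIntegrand n hd'] <;> ring

theorem stmt11 (n r : ℕ) (hr : 1 ≤ r) (d : Fin r → ℕ) (hd : ∀ k, 2 ≤ d k)
    (m D : ℕ) (hm : m = ∑ k, d k) (hD : D = ∏ k, d k ^ d k)
    (ν : ℕ) (hν : ν = n - m) (hmn : m < n)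
    -- the coefficients c̃_{p,l}^{(β)}
    (ct : ℕ → ℤ → ℕ → ℚ)
    (hct0 : ∀ (p : ℕ) (l : ℤ), ct p l 0 = if l = (p : ℤ) then 1 else 0)
    (hctz : ∀ (p : ℕ) (l : ℤ) (β : ℕ),
      (l < 0 ∨ (p : ℤ) - (ν : ℤ) * (β : ℤ) < l) → ct p l β = 0)
    (hctrec : ∀ (p : ℕ) (l : ℤ) (β : ℕ), 1 ≤ β → 0 ≤ l → l ≤ (p : ℤ) - (ν : ℤ) * (β : ℤ) →
      ct p l β = -∑ β₁ ∈ Finset.range β, ∑ k ∈ Finset.Icc (0 : ℤ) ((p : ℤ) - (ν : ℤ) * (β₁ : ℤ)),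
        ct p k β₁ * ccoef n r d k.toNat (β - β₁) l)
    -- the series ∑_{β≥0} ∑_{l=0}^{p−νβ} c̃_{p,l}^{(β)} q^β ħ^{p−νβ−l}
    (Sp : ℕ → PowerSeries (LaurentSeries ℚ))
    (hSp : ∀ (p β : ℕ), PowerSeries.coeff (R := LaurentSeries ℚ) β (Sp p) =
      ∑ l ∈ Finset.Icc (0 : ℤ) ((p : ℤ) - (ν : ℤ) * (β : ℤ)),
        HahnSeries.single ((p : ℤ) - (ν : ℤ) * (β : ℤ) - l) (ct p l β)) :
    ∀ p : ℕ,
      resH (PowerSeries.C (R := LaurentSeries ℚ)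
          (((1 + Zl) ^ n - 1) / (Zl ^ 3 * ∏ k : Fin r, ((d k : LaurentSeries ℚ) + Zl))) *
          (1 - Sp p))
        = PowerSeries.C (R := ℚ) ((n : ℚ) / ∏ k : Fin r, (d k : ℚ)) *
            (PowerSeries.C (R := ℚ) (((n : ℚ) - 1) / 2 - ∑ k : Fin r, 1 / (d k : ℚ)) *
              (1 - ∑ β ∈ Finset.range (p / ν + 1),
                PowerSeries.C (R := ℚ) (ct p ((p : ℤ) - (ν : ℤ) * (β : ℤ)) β) * PowerSeries.X ^ β)
            - ∑ β ∈ Finset.range (p / ν + 1),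
                PowerSeries.C (R := ℚ) (ct p ((p : ℤ) - (ν : ℤ) * (β : ℤ) - 1) β) *
                  PowerSeries.X ^ β) :=
  stmt11_general n r d hd m ν hν hmn ct hctz Sp hSp
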